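/- arXiv:math/0602500 — 3 statements merged into one kernel-verified Lean document; each statement's English description precedes it below -/
import Mathlib

section
/- Let k ∈ ℝ. If f : H⁺(ℝ ⊕ ℝ^n) → Cl_n satisfies the transformation law f(x) = (cx+d)̄ / ‖cx+d‖^{n+1-k} · f(M<x>) for all M = [[a,b],[c,d]] in a subgroup Γ of SAV(ℝ ⊕ ℝ^{n-1}), then g(x) := f(x) e_n / x_n^k satisfies g(x) = (cx+d)̄ / ‖cx+d‖^{n+1+k} · g(M<x>) for all M ∈ Γ. -/
/-- if `f : H⁺ → Cl_n` satisfies the weight-`(n+1-k)` transformation law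
`f(x) = (cx+d)̄ / ‖cx+d‖^{n+1-k} · f(M⟨x⟩)` for all `M` in a subgroup `Γ` of the
Ahlfors–Vahlen group, then `g(x) := f(x) eₙ / xₙᵏ` satisfies
`g(x) = (cx+d)̄ / ‖cx+d‖^{n+1+k} · g(M⟨x⟩)` for all `M ∈ Γ`.

The Möbius action of `Γ ≤ SAV(ℝ ⊕ ℝ^{n-1})` on upper half-space `X = H⁺(ℝ ⊕ ℝⁿ)` is
axiomatized: `ht x = xₙ` is the height, `J M x = cx+d`, `Jc M x = (cx+d)̄`,
`nrm M x = ‖cx+d‖`, with the standard identities `(M⟨x⟩)ₙ = xₙ/‖cx+d‖²` and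
`(cx+d)̄ (cx+d) = (cx+d)(cx+d)̄ = ‖cx+d‖²`. -/
theorem khypermonogenic_to_neg_k_transformation_law
    {A : Type*} [NormedRing A] [NormedAlgebra ℝ A]
    {G : Type*} [Group G] {X : Type*} [MulAction G X]
    (Γ : Subgroup G) (n : ℕ) (k : ℝ)
    (ht : X → ℝ) (hpos : ∀ x, 0 < ht x)
    (J Jc : G → X → A) (nrm : G → X → ℝ) (hnrm : ∀ M x, 0 < nrm M x)
    (hht : ∀ M ∈ Γ, ∀ x : X, ht (M • x) = ht x / (nrm M x) ^ 2)
    (hJl : ∀ M ∈ Γ, ∀ x : X, Jc M x * J M x = algebraMap ℝ A ((nrm M x) ^ 2))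
    (hJr : ∀ M ∈ Γ, ∀ x : X, J M x * Jc M x = algebraMap ℝ A ((nrm M x) ^ 2))
    (en : A) (f : X → A)
    (hf : ∀ M ∈ Γ, ∀ x : X,
      f x = ((nrm M x) ^ (-((n : ℝ) + 1 - k))) • (Jc M x * f (M • x))) :
    ∀ M ∈ Γ, ∀ x : X,
      ((ht x) ^ (-k)) • (f x * en) =
        ((nrm M x) ^ (-((n : ℝ) + 1 + k))) •
          (Jc M x * (((ht (M • x)) ^ (-k)) • (f (M • x) * en))) := by
  intro M hM x
  have hn := hnrm M x
  have hh := hpos x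
  have key : (ht x) ^ (-k) * (nrm M x) ^ (-((n : ℝ) + 1 - k)) =
      (nrm M x) ^ (-((n : ℝ) + 1 + k)) * (ht x / (nrm M x) ^ 2) ^ (-k) := by
    rw [Real.div_rpow hh.le (by positivity), ← Real.rpow_natCast (nrm M x) 2,
      ← Real.rpow_mul hn.le, div_eq_mul_inv, ← Real.rpow_neg hn.le,
      mul_comm ((nrm M x) ^ (-((n : ℝ) + 1 + k))), mul_assoc,
      ← Real.rpow_add hn]
    ring_nf
  rw [hht M hM x, hf M hM x, smul_mul_assoc, smul_smul, mul_smul_comm, smul_smul,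
    key, mul_assoc]
end

section
/- Let k ∈ ℝ, n ≥ 1, and let u : U → ℝ be a C² solution of the k-hyperbolic harmonic equation x_n Δu - k ∂u/∂x_n = 0 on an open subset U of upper half-space {x_n > 0} in ℝ^{n+1}. Then g(x) := x_n^{-(1-n+k)/2} u(x) satisfies Δg - (n-1)/x_n · ∂g/∂x_n + λ g / x_n² = 0 with λ = ¼(n² - (k+1)²). -/
/-- Partial derivative in the `i`-th coordinate direction. -/
noncomputable def pderiv' {n : ℕ} (i : Fin n)
    (f : EuclideanSpace ℝ (Fin n) → ℝ) (x : EuclideanSpace ℝ (Fin n)) : ℝ :=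
  fderiv ℝ f x (EuclideanSpace.single i 1)

/-- The Euclidean Laplacian `Δ = Σⱼ ∂²/∂xⱼ²`. -/
noncomputable def lap {n : ℕ} (f : EuclideanSpace ℝ (Fin n) → ℝ)
    (x : EuclideanSpace ℝ (Fin n)) : ℝ :=
  ∑ j : Fin n, pderiv' j (pderiv' j f) x

/-!
Writing `g = xₙ^α u` with `α = (n - 1 - k)/2`, the product rule gives
`Δg = xₙ^α Δu + α(α-1) xₙ^(α-2) u + 2α xₙ^(α-1) ∂ₙu` and `∂ₙg = α xₙ^(α-1) u + xₙ^α ∂ₙu`.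
Substituting `Δu = k ∂ₙu / xₙ`, the `∂ₙu` terms carry the coefficient `k + 2α - (n-1) = 0`, and the
`u` terms the coefficient `α(α - n) + λ = 0`.
-/

open Filter Topology

section CoordinateWeight

variable {n : ℕ} {f g : EuclideanSpace ℝ (Fin n) → ℝ} {x : EuclideanSpace ℝ (Fin n)}
  {w : ℝ → ℝ} {m : Fin n}

lemma pderiv'_congr_of_eventuallyEq (h : f =ᶠ[𝓝 x] g) (i : Fin n) :
    pderiv' i f x = pderiv' i g x := by
  simp only [pderiv', h.fderiv_eq]

lemma pderiv'_fun_add (hf : DifferentiableAt ℝ f x) (hg : DifferentiableAt ℝ g x) (i : Fin n) :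
    pderiv' i (fun y => f y + g y) x = pderiv' i f x + pderiv' i g x := by
  simp [pderiv', fderiv_fun_add hf hg]

lemma pderiv'_fun_mul (hf : DifferentiableAt ℝ f x) (hg : DifferentiableAt ℝ g x) (i : Fin n) :
    pderiv' i (fun y => f y * g y) x = pderiv' i f x * g x + f x * pderiv' i g x := by
  simp only [pderiv', fderiv_fun_mul hf hg, add_apply, smul_apply, smul_eq_mul]
  ring

lemma hasFDerivAt_comp_apply (hw : DifferentiableAt ℝ w (x m)) :
    HasFDerivAt (fun y : EuclideanSpace ℝ (Fin n) => w (y m))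
      (deriv w (x m) • PiLp.proj (𝕜 := ℝ) 2 _ m) x :=
  hw.hasDerivAt.comp_hasFDerivAt x (PiLp.hasFDerivAt_apply 2 x m)

lemma pderiv'_comp_apply (hw : DifferentiableAt ℝ w (x m)) (i : Fin n) :
    pderiv' i (fun y => w (y m)) x = if i = m then deriv w (x m) else 0 := by
  simp [pderiv', (hasFDerivAt_comp_apply hw).fderiv, PiLp.single_apply, eq_comm]

lemma pderiv'_comp_apply_mul (hw : DifferentiableAt ℝ w (x m)) (hf : DifferentiableAt ℝ f x)
    (i : Fin n) :
    pderiv' i (fun y => w (y m) * f y) x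
      = (if i = m then deriv w (x m) else 0) * f x + w (x m) * pderiv' i f x := by
  rw [pderiv'_fun_mul (hasFDerivAt_comp_apply hw).differentiableAt hf, pderiv'_comp_apply hw]

lemma differentiableAt_pderiv' (hf : ContDiffAt ℝ 2 f x) (i : Fin n) :
    DifferentiableAt ℝ (pderiv' i f) x :=
  ((hf.fderiv_right (m := 1) (by norm_num)).differentiableAt one_ne_zero).clm_apply
    (differentiableAt_const _)

lemma pderiv'_pderiv'_comp_apply_mul (hw : ContDiffAt ℝ 2 w (x m)) (hf : ContDiffAt ℝ 2 f x)
    (j : Fin n) :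
    pderiv' j (pderiv' j (fun y => w (y m) * f y)) x
      = w (x m) * pderiv' j (pderiv' j f) x
        + if j = m then deriv (deriv w) (x m) * f x + 2 * deriv w (x m) * pderiv' m f x
          else 0 := by
  have hw_near : ∀ᶠ y in 𝓝 x, DifferentiableAt ℝ w (y m) :=
    (PiLp.continuous_apply 2 _ m).continuousAt.eventually
      ((hw.eventually (by simp)).mono fun _ h => h.differentiableAt two_ne_zero)
  have hf_near : ∀ᶠ y in 𝓝 x, DifferentiableAt ℝ f y :=
    (hf.eventually (by simp)).mono fun _ h => h.differentiableAt two_ne_zero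
  have hfirst : pderiv' j (fun y => w (y m) * f y) =ᶠ[𝓝 x]
      fun y => (if j = m then deriv w (y m) else 0) * f y + w (y m) * pderiv' j f y := by
    filter_upwards [hw_near, hf_near] with y hwy hfy using pderiv'_comp_apply_mul hwy hfy j
  have hw₁ := hw.differentiableAt two_ne_zero
  have hw₂ : DifferentiableAt ℝ (deriv w) (x m) :=
    (hw.derivWithin (m := 1) (by norm_num)).differentiableAt one_ne_zero
  have hf₁ := hf.differentiableAt two_ne_zero
  rw [pderiv'_congr_of_eventuallyEq hfirst]
  by_cases hj : j = m
  · subst hj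
    simp only [if_true]
    rw [pderiv'_fun_add ((hasFDerivAt_comp_apply hw₂).differentiableAt.fun_mul hf₁)
        ((hasFDerivAt_comp_apply hw₁).differentiableAt.fun_mul (differentiableAt_pderiv' hf j)),
      pderiv'_comp_apply_mul hw₂ hf₁, pderiv'_comp_apply_mul hw₁ (differentiableAt_pderiv' hf j)]
    simp only [if_true]
    ring
  · simp only [hj, if_false, zero_mul, zero_add, add_zero]
    rw [pderiv'_comp_apply_mul hw₁ (differentiableAt_pderiv' hf j)]
    simp [hj]

lemma lap_comp_apply_mul (hw : ContDiffAt ℝ 2 w (x m)) (hf : ContDiffAt ℝ 2 f x) :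
    lap (fun y => w (y m) * f y) x
      = w (x m) * lap f x + deriv (deriv w) (x m) * f x + 2 * deriv w (x m) * pderiv' m f x := by
  simp only [lap, pderiv'_pderiv'_comp_apply_mul hw hf, Finset.sum_add_distrib, Finset.mul_sum,
    Finset.sum_ite_eq', Finset.mem_univ, if_true]
  ring

end CoordinateWeight

lemma deriv_deriv_rpow_const (p t : ℝ) :
    deriv (deriv fun t : ℝ => t ^ p) t = p * (p - 1) * t ^ (p - 2) := by
  simp only [Real.deriv_rpow_const', deriv_const_mul_field', Real.deriv_rpow_const]
  ring_nf

theorem khyperbolic_harmonic_to_maass_general (n : ℕ) (k : ℝ)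
    (U : Set (EuclideanSpace ℝ (Fin (n + 1)))) (hU : IsOpen U)
    (hUpos : ∀ x ∈ U, 0 < x (Fin.last n))
    (u : EuclideanSpace ℝ (Fin (n + 1)) → ℝ) (hu : ContDiffOn ℝ 2 u U)
    (heq : ∀ x ∈ U, x (Fin.last n) * lap u x - k * pderiv' (Fin.last n) u x = 0) :
    ∀ x ∈ U,
      lap (fun y => (y (Fin.last n)) ^ (-(1 - (n : ℝ) + k) / 2) * u y) x -
        ((n : ℝ) - 1) / x (Fin.last n) *
          pderiv' (Fin.last n) (fun y => (y (Fin.last n)) ^ (-(1 - (n : ℝ) + k) / 2) * u y) x +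
        ((n : ℝ) ^ 2 - (k + 1) ^ 2) / 4 *
          ((x (Fin.last n)) ^ (-(1 - (n : ℝ) + k) / 2) * u x) / (x (Fin.last n)) ^ 2 = 0 := by
  intro x hx
  set X := x (Fin.last n)
  set α := -(1 - (n : ℝ) + k) / 2
  have hX : 0 < X := hUpos x hx
  have hw : ContDiffAt ℝ 2 (fun t : ℝ => t ^ α) X := Real.contDiffAt_rpow_const_of_ne hX.ne'
  have hux : ContDiffAt ℝ 2 u x := hu.contDiffAt (hU.mem_nhds hx)
  have hlap : lap u x = k * pderiv' (Fin.last n) u x / X := by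
    rw [eq_div_iff hX.ne']
    linarith [heq x hx]
  rw [lap_comp_apply_mul hw hux,
    pderiv'_comp_apply_mul (hw.differentiableAt two_ne_zero) (hux.differentiableAt two_ne_zero),
    Real.deriv_rpow_const, deriv_deriv_rpow_const, if_pos rfl, hlap,
    Real.rpow_sub hX, Real.rpow_sub hX, Real.rpow_one, Real.rpow_two]
  field_simp
  ring

/-- if `u` is a C² solution of the `k`-hyperbolic harmonic equation
`xₙ Δu - k ∂u/∂xₙ = 0` on an open `U ⊆ {xₙ > 0} ⊆ ℝ^{n+1}`, then
`g(x) := xₙ^{-(1-n+k)/2} u(x)` satisfies the Maaß wave equation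
`Δg - (n-1)/xₙ · ∂g/∂xₙ + λ g/xₙ² = 0` with `λ = ¼(n² - (k+1)²)`. -/
theorem khyperbolic_harmonic_to_maass (n : ℕ) (hn : 1 ≤ n) (k : ℝ)
    (U : Set (EuclideanSpace ℝ (Fin (n + 1)))) (hU : IsOpen U)
    (hUpos : ∀ x ∈ U, 0 < x (Fin.last n))
    (u : EuclideanSpace ℝ (Fin (n + 1)) → ℝ) (hu : ContDiffOn ℝ 2 u U)
    (heq : ∀ x ∈ U, x (Fin.last n) * lap u x - k * pderiv' (Fin.last n) u x = 0) :
    ∀ x ∈ U,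
      lap (fun y => (y (Fin.last n)) ^ (-(1 - (n : ℝ) + k) / 2) * u y) x -
        ((n : ℝ) - 1) / x (Fin.last n) *
          pderiv' (Fin.last n) (fun y => (y (Fin.last n)) ^ (-(1 - (n : ℝ) + k) / 2) * u y) x +
        ((n : ℝ) ^ 2 - (k + 1) ^ 2) / 4 *
          ((x (Fin.last n)) ^ (-(1 - (n : ℝ) + k) / 2) * u x) / (x (Fin.last n)) ^ 2 = 0 :=
  khyperbolic_harmonic_to_maass_general n k U hU hUpos u hu heq
end

section
/- Let ‖ω‖ > 0 be a real constant and k ∈ ℝ. The pair of functions u(t) = i t^{(k+1)/2} K_{(k-1)/2}(‖ω‖ t), v(t) = ‖ω‖^{-1} t^{(k+1)/2} K_{(k+1)/2}(‖ω‖ t) (complex-valued, t > 0) solves the system u' = -i‖ω‖² v + (k/t) u, v' = i u, where K_ν denotes the modified Bessel function of the second kind. -/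
/-!
Differentiating under the integral sign (dominated by the integrand at `z / 2`, via
`2 cosh t cosh (ν t) = cosh ((ν - 1) t) + cosh ((ν + 1) t)`) gives
`K_ν' = -(K_{ν-1} + K_{ν+1}) / 2`, and integrating the derivative of `e^{-z cosh t} sinh (ν t)`
over `(0, ∞)` gives `K_{ν+1} - K_{ν-1} = (2ν / z) K_ν`. Together they yield
`(t^μ K_ν(w t))' = (μ ± ν)/t · t^μ K_ν(w t) - w t^μ K_{ν±1}(w t)`; the system is the case
`μ = (k + 1) / 2` with `ν = (k - 1) / 2` (upper sign) and `ν = (k + 1) / 2` (lower sign).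
-/

open Real Complex

/-- The modified Bessel function of the second kind,
`K_ν(z) = ∫₀^∞ e^{-z cosh t} cosh(ν t) dt` (for `z > 0`). -/
noncomputable def besselK (ν z : ℝ) : ℝ :=
  ∫ t in Set.Ioi (0 : ℝ), Real.exp (-z * Real.cosh t) * Real.cosh (ν * t)

open MeasureTheory Set Filter Metric

noncomputable def besselKIntegrand (ν z t : ℝ) : ℝ :=
  rexp (-z * Real.cosh t) * Real.cosh (ν * t)

theorem besselK_eq_integral_besselKIntegrand (ν z : ℝ) :
    besselK ν z = ∫ t in Ioi 0, besselKIntegrand ν z t :=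
  rfl

namespace Real

theorem one_add_sq_div_two_le_cosh (t : ℝ) : 1 + t ^ 2 / 2 ≤ cosh t := by
  have hsinh : (t / 2) ^ 2 ≤ sinh (t / 2) ^ 2 := by
    rw [← sq_abs (sinh _), abs_sinh, ← sq_abs (t / 2)]
    gcongr
    exact self_le_sinh_iff.2 (abs_nonneg _)
  have hcosh := cosh_two_mul (t / 2)
  rw [mul_div_cancel₀ t two_ne_zero, cosh_sq'] at hcosh
  nlinarith

theorem cosh_le_exp_abs (t : ℝ) : cosh t ≤ exp |t| := by
  rw [← cosh_abs, cosh_eq]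
  linarith [exp_le_exp.2 (neg_le_self (abs_nonneg t))]

theorem two_mul_cosh_mul_cosh (x y : ℝ) : 2 * cosh x * cosh y = cosh (x - y) + cosh (x + y) := by
  rw [cosh_sub, cosh_add]; ring

theorem two_mul_sinh_mul_sinh (x y : ℝ) : 2 * sinh x * sinh y = cosh (x + y) - cosh (x - y) := by
  rw [cosh_sub, cosh_add]; ring

theorem abs_sinh_le_cosh (x : ℝ) : |sinh x| ≤ cosh x := by
  rw [abs_sinh, ← cosh_abs]
  exact (sinh_lt_cosh _).le

end Real

section besselKIntegrand

variable {ν z t : ℝ}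

theorem besselKIntegrand_pos : 0 < besselKIntegrand ν z t := by
  unfold besselKIntegrand; positivity

@[fun_prop]
theorem continuous_besselKIntegrand (ν z : ℝ) : Continuous fun t => besselKIntegrand ν z t := by
  unfold besselKIntegrand; fun_prop

theorem antitone_besselKIntegrand (ν t : ℝ) : Antitone fun z => besselKIntegrand ν z t := by
  intro x y hxy
  dsimp only [besselKIntegrand]
  gcongr

theorem besselKIntegrand_le_gaussian (hz : 0 < z) (ht : 0 ≤ t) :
    besselKIntegrand ν z t ≤
      rexp (ν ^ 2 / (2 * z) - z) * rexp (-(z / 2) * (t - |ν| / z) ^ 2) := by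
  have hcosh : Real.cosh (ν * t) ≤ rexp (|ν| * t) := by
    simpa [abs_mul, abs_of_nonneg ht] using cosh_le_exp_abs (ν * t)
  calc besselKIntegrand ν z t ≤ rexp (-z * (1 + t ^ 2 / 2)) * rexp (|ν| * t) := by
        refine mul_le_mul (Real.exp_le_exp.2 ?_) hcosh (Real.cosh_pos _).le (Real.exp_pos _).le
        nlinarith [one_add_sq_div_two_le_cosh t]
    _ = rexp (ν ^ 2 / (2 * z) - z) * rexp (-(z / 2) * (t - |ν| / z) ^ 2) := by
        rw [← Real.exp_add, ← Real.exp_add, ← sq_abs ν]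
        congr 1
        field_simp
        ring

theorem integrableOn_besselKIntegrand (ν : ℝ) (hz : 0 < z) :
    IntegrableOn (besselKIntegrand ν z) (Ioi 0) := by
  have hgauss :
      Integrable fun t => rexp (ν ^ 2 / (2 * z) - z) * rexp (-(z / 2) * (t - |ν| / z) ^ 2) :=
    ((integrable_exp_neg_mul_sq (half_pos hz)).comp_sub_right _).const_mul _
  refine hgauss.integrableOn.mono' (continuous_besselKIntegrand ν z).aestronglyMeasurable ?_
  filter_upwards [ae_restrict_mem measurableSet_Ioi] with t ht
  rw [norm_of_nonneg besselKIntegrand_pos.le]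
  exact besselKIntegrand_le_gaussian hz (le_of_lt ht)

theorem two_mul_cosh_mul_besselKIntegrand (ν z t : ℝ) :
    2 * Real.cosh t * besselKIntegrand ν z t =
      besselKIntegrand (ν - 1) z t + besselKIntegrand (ν + 1) z t := by
  simp only [besselKIntegrand, sub_mul, add_mul, one_mul]
  linear_combination rexp (-z * Real.cosh t) * Real.two_mul_cosh_mul_cosh (ν * t) t

theorem hasDerivAt_besselKIntegrand (ν t x : ℝ) :
    HasDerivAt (fun z => besselKIntegrand ν z t)
      (-(besselKIntegrand (ν - 1) x t + besselKIntegrand (ν + 1) x t) / 2) x := by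
  refine (((hasDerivAt_neg x).mul_const (Real.cosh t)).exp.mul_const
    (Real.cosh (ν * t))).congr_deriv ?_
  rw [← two_mul_cosh_mul_besselKIntegrand, besselKIntegrand]
  ring

theorem norm_deriv_besselKIntegrand_le {x y : ℝ} (hxy : y ≤ x) :
    ‖-(besselKIntegrand (ν - 1) x t + besselKIntegrand (ν + 1) x t) / 2‖ ≤
      (besselKIntegrand (ν - 1) y t + besselKIntegrand (ν + 1) y t) / 2 := by
  rw [norm_div, norm_neg, Real.norm_two,
    norm_of_nonneg (add_pos besselKIntegrand_pos besselKIntegrand_pos).le]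
  gcongr <;> exact antitone_besselKIntegrand _ _ hxy

theorem hasDerivAt_exp_neg_mul_cosh_mul_sinh (ν z t : ℝ) :
    HasDerivAt (fun s => rexp (-z * Real.cosh s) * Real.sinh (ν * s))
      (ν * besselKIntegrand ν z t -
        z / 2 * (besselKIntegrand (ν + 1) z t - besselKIntegrand (ν - 1) z t)) t := by
  refine ((((Real.hasDerivAt_cosh t).const_mul (-z)).exp).mul
    ((hasDerivAt_id' t).const_mul ν).sinh).congr_deriv ?_
  simp only [besselKIntegrand, add_mul, sub_mul, one_mul]
  linear_combination -(rexp (-z * Real.cosh t) * z / 2) * Real.two_mul_sinh_mul_sinh (ν * t) t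

theorem norm_exp_neg_mul_cosh_mul_sinh_le (ν z t : ℝ) :
    ‖rexp (-z * Real.cosh t) * Real.sinh (ν * t)‖ ≤ besselKIntegrand ν z t := by
  rw [norm_mul, Real.norm_of_nonneg (Real.exp_pos _).le, Real.norm_eq_abs]
  exact mul_le_mul_of_nonneg_left (Real.abs_sinh_le_cosh _) (Real.exp_pos _).le

end besselKIntegrand

theorem hasDerivAt_besselK (ν : ℝ) {z : ℝ} (hz : 0 < z) :
    HasDerivAt (besselK ν) (-(besselK (ν - 1) z + besselK (ν + 1) z) / 2) z := by
  have h := hasDerivAt_integral_of_dominated_loc_of_deriv_le (μ := volume.restrict (Ioi 0))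
    (F := fun x t => besselKIntegrand ν x t)
    (F' := fun x t => -(besselKIntegrand (ν - 1) x t + besselKIntegrand (ν + 1) x t) / 2)
    (bound := fun t =>
      (besselKIntegrand (ν - 1) (z / 2) t + besselKIntegrand (ν + 1) (z / 2) t) / 2)
    (ball_mem_nhds z (half_pos hz))
    (Eventually.of_forall fun x => (continuous_besselKIntegrand ν x).aestronglyMeasurable)
    (integrableOn_besselKIntegrand ν hz)
    (by fun_prop)
    (Eventually.of_forall fun t x hx => norm_deriv_besselKIntegrand_le <| by
      rw [Real.ball_eq_Ioo] at hx; linarith [hx.1])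
    (((integrableOn_besselKIntegrand _ (half_pos hz)).add
      (integrableOn_besselKIntegrand _ (half_pos hz))).div_const 2)
    (Eventually.of_forall fun t x _ => hasDerivAt_besselKIntegrand ν t x)
  rw [integral_div, integral_neg, integral_add (integrableOn_besselKIntegrand _ hz)
    (integrableOn_besselKIntegrand _ hz)] at h
  exact h.2

theorem besselK_add_one_sub_besselK_sub_one (ν : ℝ) {z : ℝ} (hz : 0 < z) :
    besselK (ν + 1) z - besselK (ν - 1) z = 2 * ν / z * besselK ν z := by
  set G := fun s => rexp (-z * Real.cosh s) * Real.sinh (ν * s)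
  have hG := hasDerivAt_exp_neg_mul_cosh_mul_sinh ν z
  have hK (μ : ℝ) : IntegrableOn (besselKIntegrand μ z) (Ioi 0) :=
    integrableOn_besselKIntegrand μ hz
  have hdiff : IntegrableOn (fun t => besselKIntegrand (ν + 1) z t - besselKIntegrand (ν - 1) z t)
      (Ioi 0) := (hK _).sub (hK _)
  have hG'int : IntegrableOn (fun t => ν * besselKIntegrand ν z t -
      z / 2 * (besselKIntegrand (ν + 1) z t - besselKIntegrand (ν - 1) z t)) (Ioi 0) :=
    ((hK ν).const_mul ν).sub (hdiff.const_mul _)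
  have hGint : IntegrableOn G (Ioi 0) :=
    (hK ν).mono' (by fun_prop) (Eventually.of_forall (norm_exp_neg_mul_cosh_mul_sinh_le ν z))
  -- `G` vanishes at `0`, and at `∞` because both `G` and `G'` are integrable.
  have h := integral_Ioi_of_hasDerivAt_of_tendsto' (fun t _ => hG t) hG'int
    (tendsto_zero_of_hasDerivAt_of_integrableOn_Ioi (fun t _ => hG t) hG'int hGint)
  rw [integral_sub ((hK ν).const_mul ν) (hdiff.const_mul _), integral_const_mul,
    integral_const_mul, integral_sub (hK _) (hK _)] at h
  simp only [← besselK_eq_integral_besselKIntegrand, mul_zero, Real.sinh_zero, sub_zero] at h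
  field_simp
  linarith

section rpowMulBesselK

variable (μ ν : ℝ) {w t : ℝ}

theorem hasDerivAt_rpow_mul_besselK (hw : 0 < w) (ht : 0 < t) :
    HasDerivAt (fun s => s ^ μ * besselK ν (w * s))
      (μ / t * (t ^ μ * besselK ν (w * t)) -
        w / 2 * (t ^ μ * (besselK (ν - 1) (w * t) + besselK (ν + 1) (w * t)))) t := by
  have hK : HasDerivAt (fun s => besselK ν (w * s))
      (-(besselK (ν - 1) (w * t) + besselK (ν + 1) (w * t)) / 2 * w) t := by
    refine ((hasDerivAt_besselK ν (mul_pos hw ht)).comp t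
      ((hasDerivAt_id' t).const_mul w)).congr_deriv ?_
    ring
  refine ((Real.hasDerivAt_rpow_const (Or.inl ht.ne')).mul hK).congr_deriv ?_
  rw [Real.rpow_sub_one ht.ne']
  ring

theorem hasDerivAt_rpow_mul_besselK_of_add_one (hw : 0 < w) (ht : 0 < t) :
    HasDerivAt (fun s => s ^ μ * besselK ν (w * s))
      ((μ + ν) / t * (t ^ μ * besselK ν (w * t)) -
        w * (t ^ μ * besselK (ν + 1) (w * t))) t := by
  refine (hasDerivAt_rpow_mul_besselK μ ν hw ht).congr_deriv ?_
  have h := besselK_add_one_sub_besselK_sub_one ν (mul_pos hw ht)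
  field_simp at h ⊢
  linear_combination h

theorem hasDerivAt_rpow_mul_besselK_of_sub_one (hw : 0 < w) (ht : 0 < t) :
    HasDerivAt (fun s => s ^ μ * besselK ν (w * s))
      ((μ - ν) / t * (t ^ μ * besselK ν (w * t)) -
        w * (t ^ μ * besselK (ν - 1) (w * t))) t := by
  refine (hasDerivAt_rpow_mul_besselK μ ν hw ht).congr_deriv ?_
  have h := besselK_add_one_sub_besselK_sub_one ν (mul_pos hw ht)
  field_simp at h ⊢
  linear_combination -h

end rpowMulBesselK

/-- for `‖ω‖ > 0` and `k ∈ ℝ`, the pair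
`u(t) = i t^{(k+1)/2} K_{(k-1)/2}(‖ω‖ t)`, `v(t) = ‖ω‖⁻¹ t^{(k+1)/2} K_{(k+1)/2}(‖ω‖ t)`
solves the system `u' = -i‖ω‖² v + (k/t) u`, `v' = i u` on `(0,∞)`. -/
theorem bessel_system_one (w k : ℝ) (hw : 0 < w) :
    ∀ t : ℝ, 0 < t →
      HasDerivAt (fun t : ℝ => (Complex.I * ((t ^ ((k + 1) / 2) : ℝ) : ℂ) *
          ((besselK ((k - 1) / 2) (w * t) : ℝ) : ℂ)))
        (-Complex.I * ((w : ℂ)) ^ 2 *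
            (((w⁻¹ : ℝ) : ℂ) * ((t ^ ((k + 1) / 2) : ℝ) : ℂ) *
              ((besselK ((k + 1) / 2) (w * t) : ℝ) : ℂ)) +
          ((k : ℂ) / (t : ℂ)) *
            (Complex.I * ((t ^ ((k + 1) / 2) : ℝ) : ℂ) *
              ((besselK ((k - 1) / 2) (w * t) : ℝ) : ℂ))) t ∧
      HasDerivAt (fun t : ℝ => (((w⁻¹ : ℝ) : ℂ) * ((t ^ ((k + 1) / 2) : ℝ) : ℂ) *
          ((besselK ((k + 1) / 2) (w * t) : ℝ) : ℂ)))
        (Complex.I * (Complex.I * ((t ^ ((k + 1) / 2) : ℝ) : ℂ) *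
          ((besselK ((k - 1) / 2) (w * t) : ℝ) : ℂ))) t := by
  intro t ht
  have hu := hasDerivAt_rpow_mul_besselK_of_add_one ((k + 1) / 2) ((k - 1) / 2) hw ht
  have hv := hasDerivAt_rpow_mul_besselK_of_sub_one ((k + 1) / 2) ((k + 1) / 2) hw ht
  rw [show (k + 1) / 2 + (k - 1) / 2 = k by ring, show (k - 1) / 2 + 1 = (k + 1) / 2 by ring] at hu
  rw [sub_self, zero_div, zero_mul, zero_sub, show (k + 1) / 2 - 1 = (k - 1) / 2 by ring] at hv
  constructor
  · have h := hu.ofReal_comp.const_mul Complex.I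
    simp only [Complex.ofReal_mul, ← mul_assoc] at h
    refine h.congr_deriv ?_
    push_cast
    field_simp
    ring
  · have hw' : (w : ℂ) ≠ 0 := Complex.ofReal_ne_zero.2 hw.ne'
    have h := hv.ofReal_comp.const_mul ((w⁻¹ : ℝ) : ℂ)
    simp only [Complex.ofReal_mul, ← mul_assoc] at h
    refine h.congr_deriv ?_
    push_cast
    field_simp
    linear_combination
      -(↑(t ^ ((k + 1) / 2)) * ↑(besselK ((k - 1) / 2) (w * t)) : ℂ) * Complex.I_sq
end
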